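/- arXiv:2603.11264 — 5 statements merged into one kernel-verified Lean document; each statement's English description precedes it below -/
import Mathlib

section
/- Let X be a finite nonempty set, let T_1, …, T_m : X → X be maps, and let (x_n)_{n≥0} be a sequence in X with x_{n+1} = T_{ν(n)}(x_n) for some schedule ν : ℕ → {1,…,m}. Assume: (1) there is a Lyapunov function U : X → ℝ such that U(T_i(x)) < U(x) for every x ∈ X and i ∈ {1,…,m} with T_i(x) ≠ x; and (2) there exists B ∈ ℕ such that for every i ∈ {1,…,m} and every n ∈ ℕ there is a k with n ≤ k ≤ n + B and ν(k) = i (every map is applied with bounded gaps). Then there exist n' ∈ ℕ and a point x̄ ∈ X that is a common fixed point of all the maps (T_i(x̄) = x̄ for all i ∈ {1,…,m}) such that x_n = x̄ for all n ≥ n'. -/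
/-!
Along the trajectory `U` never increases and takes only finitely many values, so `U (x n)` is
eventually constant. From then on no step can move the point, since a moving step strictly
decreases `U`; hence the trajectory is stationary, and as every map is still applied after that
time, its final point is fixed by all of them.
-/

theorem Antitone.exists_forall_ge_eq_of_finite_range {α : Type*} [LinearOrder α] {f : ℕ → α}
    (hf : Antitone f) (hfin : (Set.range f).Finite) : ∃ N, ∀ n ≥ N, f n = f N := by
  obtain ⟨_, ⟨N, rfl⟩, hmin⟩ := Set.exists_min_image (Set.range f) id hfin (Set.range_nonempty f)
  exact ⟨N, fun n hn => le_antisymm (hf hn) (hmin _ ⟨n, rfl⟩)⟩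

section Trajectory

variable {X ι α : Type*} [LinearOrder α] {T : ι → X → X} {ν : ℕ → ι} {x : ℕ → X} {U : X → α}

theorem antitone_comp_of_lyapunov (hx : ∀ n, x (n + 1) = T (ν n) (x n))
    (hU : ∀ i y, T i y ≠ y → U (T i y) < U y) : Antitone (U ∘ x) := by
  refine antitone_nat_of_succ_le fun n => ?_
  simp only [Function.comp_apply, hx n]
  rcases eq_or_ne (T (ν n) (x n)) (x n) with h | h
  · rw [h]
  · exact (hU _ _ h).le

theorem apply_eq_self_of_lyapunov_eq (hx : ∀ n, x (n + 1) = T (ν n) (x n))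
    (hU : ∀ i y, T i y ≠ y → U (T i y) < U y) {n : ℕ} (hn : U (x (n + 1)) = U (x n)) :
    T (ν n) (x n) = x n := by
  by_contra h
  exact (hx n ▸ hU _ _ h).ne hn

theorem exists_forall_ge_eq_of_lyapunov [Finite X] (hx : ∀ n, x (n + 1) = T (ν n) (x n))
    (hU : ∀ i y, T i y ≠ y → U (T i y) < U y) : ∃ N, ∀ n ≥ N, x n = x N := by
  obtain ⟨N, hN⟩ := (antitone_comp_of_lyapunov hx hU).exists_forall_ge_eq_of_finite_range
    ((Set.finite_range U).subset (Set.range_comp_subset_range x U))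
  refine ⟨N, fun n hn => ?_⟩
  induction n, hn using Nat.le_induction with
  | base => rfl
  | succ n hn ih =>
    have hfix : T (ν n) (x n) = x n :=
      apply_eq_self_of_lyapunov_eq hx hU ((hN (n + 1) (by omega)).trans (hN n hn).symm)
    rw [hx n, hfix, ih]

end Trajectory

theorem setValuedMap_convergence_general
    {X : Type*} [Fintype X] (m : ℕ)
    (T : Fin m → X → X) (ν : ℕ → Fin m) (x : ℕ → X)
    (hx : ∀ n : ℕ, x (n + 1) = T (ν n) (x n))
    (U : X → ℝ)
    (hU : ∀ (i : Fin m) (y : X), T i y ≠ y → U (T i y) < U y)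
    (B : ℕ)
    (hν : ∀ (i : Fin m) (n : ℕ), ∃ k : ℕ, n ≤ k ∧ k ≤ n + B ∧ ν k = i) :
    ∃ (n' : ℕ) (xbar : X), (∀ i : Fin m, T i xbar = xbar) ∧ ∀ n ≥ n', x n = xbar := by
  obtain ⟨N, hN⟩ := exists_forall_ge_eq_of_lyapunov hx hU
  refine ⟨N, x N, fun i => ?_, hN⟩
  obtain ⟨k, hNk, -, rfl⟩ := hν i N
  have hstep := hx k
  rw [hN k hNk, hN (k + 1) (by omega)] at hstep
  exact hstep.symm

/-- Lemma on convergence of set-valued maps: On a finite nonempty set `X`, a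
sequence evolving by applying maps `T 1, …, T m` according to a schedule `ν` with bounded gaps,
admitting a Lyapunov function `U` that strictly decreases on every non-fixed application,
reaches in finite time a common fixed point of all the maps and stays there forever. -/
theorem setValuedMap_convergence
    {X : Type*} [Fintype X] [Nonempty X] (m : ℕ)
    (T : Fin m → X → X) (ν : ℕ → Fin m) (x : ℕ → X)
    (hx : ∀ n : ℕ, x (n + 1) = T (ν n) (x n))
    (U : X → ℝ)
    (hU : ∀ (i : Fin m) (y : X), T i y ≠ y → U (T i y) < U y)
    (B : ℕ)
    (hν : ∀ (i : Fin m) (n : ℕ), ∃ k : ℕ, n ≤ k ∧ k ≤ n + B ∧ ν k = i) :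
    ∃ (n' : ℕ) (xbar : X), (∀ i : Fin m, T i xbar = xbar) ∧ ∀ n ≥ n', x n = xbar :=
  setValuedMap_convergence_general m T ν x hx U hU B hν
end

section
/- Let V be a finite nonempty set, N ≥ 1, and F : V^N → ℝ. Let ν : ℕ → {1,…,N} be a schedule for which there exists B ∈ ℕ such that for every coordinate i and every n there is k with n ≤ k ≤ n + B and ν(k) = i. Let (η_n)_{n≥0} be a sequence in V^N evolving by asynchronous coordinate descent: η_{n+1} agrees with η_n in every coordinate except possibly coordinate ν(n); if F(η_n) ≤ F(η_n[ν(n) := v]) for all v ∈ V then η_{n+1} = η_n; otherwise η_{n+1} = η_n[ν(n) := v*] for some v* minimizing v ↦ F(η_n[ν(n) := v]) over V. Then there exist n' ∈ ℕ and η̄ ∈ V^N such that η_n = η̄ for all n ≥ n', and η̄ is a coordinate-wise minimum of F, i.e., F(η̄) ≤ F(η̄[i := v]) for every coordinate i ∈ {1,…,N} and every v ∈ V. -/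
/-!
Along the run, `F (η n)` never increases, and it strictly decreases whenever the base station
relocates an agent. Since `F` takes finitely many values on the finite configuration space, this
value is eventually constant, hence no relocation happens from then on and `η` is eventually
constant. As the schedule still visits every coordinate after that time, each such visit certifies
that the limit configuration cannot be improved along that coordinate.
-/

open Function

section CoordDescent

variable {ι V β : Type*} [DecidableEq ι] [LinearOrder β]

theorem Antitone.exists_forall_ge_eq_of_finite_range_s4 {u : ℕ → β} (hu : Antitone u)
    (hfin : (Set.range u).Finite) : ∃ n₀, ∀ n ≥ n₀, u n = u n₀ := by
  have := hfin.to_subtype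
  obtain ⟨n₀, hn₀⟩ := WellFoundedLT.antitone_chain_condition
    (f := Set.rangeFactorization u) fun _ _ h ↦ hu h
  exact ⟨n₀, fun n hn ↦ congrArg Subtype.val (hn₀ n hn).symm⟩

def IsCoordMin (F : (ι → V) → β) (i : ι) (x : ι → V) : Prop :=
  ∀ v, F x ≤ F (update x i v)

structure IsCoordDescentStep (F : (ι → V) → β) (i : ι) (x y : ι → V) : Prop where
  eq_of_isCoordMin : IsCoordMin F i x → y = x
  exists_argmin : ¬ IsCoordMin F i x →
    ∃ v₀, (∀ v, F (update x i v₀) ≤ F (update x i v)) ∧ y = update x i v₀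

namespace IsCoordDescentStep

variable {F : (ι → V) → β} {i : ι} {x y : ι → V}

theorem le (h : IsCoordDescentStep F i x y) : F y ≤ F x := by
  by_cases hx : IsCoordMin F i x
  · rw [h.eq_of_isCoordMin hx]
  · obtain ⟨v₀, hv₀, rfl⟩ := h.exists_argmin hx
    simpa using hv₀ (x i)

theorem isCoordMin_of_le (h : IsCoordDescentStep F i x y) (hxy : F x ≤ F y) :
    IsCoordMin F i x := by
  by_contra hx
  obtain ⟨v₀, hv₀, rfl⟩ := h.exists_argmin hx
  obtain ⟨v, hv⟩ : ∃ v, F (update x i v) < F x := by simpa [IsCoordMin] using hx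
  exact (hv₀ v).not_gt (hv.trans_le hxy)

theorem eq_of_le (h : IsCoordDescentStep F i x y) (hxy : F x ≤ F y) : y = x :=
  h.eq_of_isCoordMin (h.isCoordMin_of_le hxy)

end IsCoordDescentStep

theorem exists_forall_ge_eq_of_isCoordDescentStep [Finite ι] [Finite V]
    {F : (ι → V) → β} {ν : ℕ → ι} {η : ℕ → ι → V}
    (hstep : ∀ n, IsCoordDescentStep F (ν n) (η n) (η (n + 1))) :
    ∃ n₀, ∀ n ≥ n₀, η n = η n₀ := by
  have hanti : Antitone (F ∘ η) := antitone_nat_of_succ_le fun n ↦ (hstep n).le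
  obtain ⟨n₀, hn₀⟩ := hanti.exists_forall_ge_eq_of_finite_range_s4
    ((Set.finite_range F).subset (Set.range_comp_subset_range η F))
  refine ⟨n₀, fun n hn ↦ ?_⟩
  induction n, hn using Nat.le_induction with
  | base => rfl
  | succ n hn ih =>
    have hF : F (η n) ≤ F (η (n + 1)) := (hn₀ n hn).trans_le (hn₀ (n + 1) (by omega)).ge
    rw [(hstep n).eq_of_le hF, ih]

end CoordDescent

theorem asynchronous_coordinate_descent_convergence_general
    {V : Type*} [Fintype V] (N : ℕ)
    (F : (Fin N → V) → ℝ) (ν : ℕ → Fin N) (B : ℕ)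
    (hν : ∀ (i : Fin N) (n : ℕ), ∃ k : ℕ, n ≤ k ∧ k ≤ n + B ∧ ν k = i)
    (η : ℕ → Fin N → V)
    (hnomove : ∀ n : ℕ,
      (∀ v : V, F (η n) ≤ F (Function.update (η n) (ν n) v)) → η (n + 1) = η n)
    (hmove : ∀ n : ℕ,
      ¬ (∀ v : V, F (η n) ≤ F (Function.update (η n) (ν n) v)) →
      ∃ vstar : V,
        (∀ v : V, F (Function.update (η n) (ν n) vstar) ≤ F (Function.update (η n) (ν n) v)) ∧
        η (n + 1) = Function.update (η n) (ν n) vstar) :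
    ∃ (n' : ℕ) (ηbar : Fin N → V), (∀ n ≥ n', η n = ηbar) ∧
      ∀ (i : Fin N) (v : V), F ηbar ≤ F (Function.update ηbar i v) := by
  have hstep : ∀ n, IsCoordDescentStep F (ν n) (η n) (η (n + 1)) :=
    fun n ↦ ⟨hnomove n, hmove n⟩
  obtain ⟨n₀, hn₀⟩ := exists_forall_ge_eq_of_isCoordDescentStep hstep
  refine ⟨n₀, η n₀, hn₀, fun i ↦ ?_⟩
  obtain ⟨k, hk, -, rfl⟩ := hν i n₀
  have hmin := (hstep k).isCoordMin_of_le (by rw [hn₀ k hk, hn₀ (k + 1) (by omega)])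
  rwa [hn₀ k hk] at hmin

/-- Asynchronous coordinate descent of a function `F : V^N → ℝ` over a finite set
`V`, driven by a schedule `ν` with bounded gaps, converges in finite time to a configuration
`ηbar` that is a coordinate-wise minimum of `F`. -/
theorem asynchronous_coordinate_descent_convergence
    {V : Type*} [Fintype V] [Nonempty V] (N : ℕ) (hN : 1 ≤ N)
    (F : (Fin N → V) → ℝ) (ν : ℕ → Fin N) (B : ℕ)
    (hν : ∀ (i : Fin N) (n : ℕ), ∃ k : ℕ, n ≤ k ∧ k ≤ n + B ∧ ν k = i)
    (η : ℕ → Fin N → V)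
    (hstay : ∀ (n : ℕ) (i : Fin N), i ≠ ν n → η (n + 1) i = η n i)
    (hnomove : ∀ n : ℕ,
      (∀ v : V, F (η n) ≤ F (Function.update (η n) (ν n) v)) → η (n + 1) = η n)
    (hmove : ∀ n : ℕ,
      ¬ (∀ v : V, F (η n) ≤ F (Function.update (η n) (ν n) v)) →
      ∃ vstar : V,
        (∀ v : V, F (Function.update (η n) (ν n) vstar) ≤ F (Function.update (η n) (ν n) v)) ∧
        η (n + 1) = Function.update (η n) (ν n) vstar) :
    ∃ (n' : ℕ) (ηbar : Fin N → V), (∀ n ≥ n', η n = ηbar) ∧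
      ∀ (i : Fin N) (v : V), F ηbar ≤ F (Function.update ηbar i v) :=
  asynchronous_coordinate_descent_convergence_general N F ν B hν η hnomove hmove
end

section
/- Let V be a finite nonempty index set, let Σ_0 be a symmetric positive semidefinite real matrix indexed by V × V, let K be a symmetric positive semidefinite M × M real matrix with eigenvalues λ_1, …, λ_M (listed with multiplicity), let σ > 0 and n ≥ 1. For a tuple X = (s_1, …, s_n) ∈ V^n, let Σ_X be the n × n matrix with (k,l)-entry (Σ_0)_{s_k s_l}. Then the multitask maximal mutual information gain satisfies max_{X ∈ V^n} (1/2) log det(I_{nM} + σ^{-2} (Σ_X ⊗ K)) ≤ Σ_{j=1}^M max_{X ∈ V^n} (1/2) log det(I_n + σ^{-2} λ_j Σ_X); i.e., γ_n^K(σ²) ≤ Σ_{j=1}^M γ_n^{sngl}(σ²/λ_j), where γ_n^{sngl}(σ²/λ_j) denotes the single-task maximal information gain max_X (1/2) log det(I_n + (λ_j/σ²) Σ_X). -/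
open Matrix Kronecker

lemma psd_smul_nonneg {m : Type*} [Fintype m] {S : Matrix m m ℝ} (hS : S.PosSemidef)
    {c : ℝ} (hc : 0 ≤ c) : (c • S).PosSemidef := by
  refine ⟨by simpa [Matrix.IsHermitian] using congrArg (c • ·) hS.1, fun x => ?_⟩
  exact (hS.smul hc).2 x

lemma one_add_smul_kronecker_diagonal {m o : Type*} [Fintype m] [Fintype o]
    [DecidableEq m] [DecidableEq o] (c : ℝ) (S : Matrix m m ℝ) (d : o → ℝ) :
    (1 : Matrix (m × o) (m × o) ℝ) + c • (S ⊗ₖ Matrix.diagonal d)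
      = Matrix.blockDiagonal (fun j => (1 : Matrix m m ℝ) + (c * d j) • S) := by
  ext ⟨k, j⟩ ⟨l, j'⟩
  by_cases h : j = j'
  · subst h
    by_cases hk : k = l <;>
      simp [Matrix.blockDiagonal_apply, Matrix.one_apply, Matrix.kroneckerMap_apply,
        Matrix.diagonal_apply, hk, Prod.ext_iff] <;> ring
  · simp [Matrix.blockDiagonal_apply, Matrix.one_apply, Matrix.kroneckerMap_apply,
      Matrix.diagonal_apply, h, Prod.ext_iff]

lemma det_one_add_smul_kronecker {m : Type*} [Fintype m] [DecidableEq m] {M : ℕ}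
    (c : ℝ) (S : Matrix m m ℝ) (K : Matrix (Fin M) (Fin M) ℝ) (hK : K.IsHermitian) :
    ((1 : Matrix (m × Fin M) (m × Fin M) ℝ) + c • (S ⊗ₖ K)).det
      = ∏ j, ((1 : Matrix m m ℝ) + (c * hK.eigenvalues j) • S).det := by
  set U : Matrix (Fin M) (Fin M) ℝ := (hK.eigenvectorUnitary : Matrix (Fin M) (Fin M) ℝ) with hUdef
  have hU : U * star U = 1 := Matrix.mem_unitaryGroup_iff.mp hK.eigenvectorUnitary.2
  set D : Matrix (Fin M) (Fin M) ℝ := Matrix.diagonal hK.eigenvalues with hDdef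
  have hspec : K = U * D * star U := by
    have h := hK.spectral_theorem
    rwa [show (RCLike.ofReal ∘ hK.eigenvalues : Fin M → ℝ) = hK.eigenvalues by
      ext j; simp [RCLike.ofReal_real_eq_id]] at h
  have key : (1 : Matrix (m × Fin M) (m × Fin M) ℝ) + c • (S ⊗ₖ K)
      = ((1 : Matrix m m ℝ) ⊗ₖ U) * ((1 : Matrix (m × Fin M) (m × Fin M) ℝ) + c • (S ⊗ₖ D))
          * ((1 : Matrix m m ℝ) ⊗ₖ star U) := by
    rw [Matrix.mul_add, Matrix.add_mul, Matrix.mul_smul, Matrix.smul_mul,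
      Matrix.mul_one]
    congr 1
    · rw [← Matrix.mul_kronecker_mul, Matrix.one_mul, hU, Matrix.one_kronecker_one]
    · rw [← Matrix.mul_kronecker_mul, ← Matrix.mul_kronecker_mul, Matrix.one_mul,
        Matrix.mul_one, ← hspec]
  have hdetU : ((1 : Matrix m m ℝ) ⊗ₖ U).det * ((1 : Matrix m m ℝ) ⊗ₖ star U).det = 1 := by
    rw [← Matrix.det_mul, ← Matrix.mul_kronecker_mul, Matrix.one_mul, hU,
      Matrix.one_kronecker_one, Matrix.det_one]
  rw [key, Matrix.det_mul, Matrix.det_mul,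
    one_add_smul_kronecker_diagonal, Matrix.det_blockDiagonal]
  calc ((1 : Matrix m m ℝ) ⊗ₖ U).det * (∏ j, ((1 : Matrix m m ℝ) + (c * hK.eigenvalues j) • S).det)
        * ((1 : Matrix m m ℝ) ⊗ₖ star U).det
      = (∏ j, ((1 : Matrix m m ℝ) + (c * hK.eigenvalues j) • S).det)
          * (((1 : Matrix m m ℝ) ⊗ₖ U).det * ((1 : Matrix m m ℝ) ⊗ₖ star U).det) := by ring
    _ = _ := by rw [hdetU, mul_one]

/-- Multitask maximal mutual information gain: with spatial covariance `S0` over a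
finite vertex set `V`, inter-task covariance `K` with eigenvalues `λ_j`, noise variance `σ²`, and
`S_X` the principal submatrix of `S0` at a sampling tuple `X ∈ V^n`, we have
`γ_n^K(σ²) = max_X (1/2) log det(I + σ⁻² (S_X ⊗ K)) ≤ ∑_j γ_n^{sngl}(σ²/λ_j)`. -/
theorem multitask_max_info_gain_le
    {V : Type*} [Fintype V] [Nonempty V] [DecidableEq V]
    {M : ℕ} (S0 : Matrix V V ℝ) (hS0 : S0.PosSemidef)
    (K : Matrix (Fin M) (Fin M) ℝ) (hK : K.PosSemidef)
    (σ : ℝ) (hσ : 0 < σ) (n : ℕ) (hn : 1 ≤ n) :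
    (Finset.univ.sup' Finset.univ_nonempty fun X : Fin n → V =>
        (1 / 2) * Real.log ((1 + (σ ^ 2)⁻¹ • ((S0.submatrix X X) ⊗ₖ K)).det)) ≤
    ∑ j : Fin M,
      (Finset.univ.sup' Finset.univ_nonempty fun X : Fin n → V =>
        (1 / 2) * Real.log
          ((1 + (hK.isHermitian.eigenvalues j / σ ^ 2) • (S0.submatrix X X)).det)) := by
  apply Finset.sup'_le
  intro X _
  have hc : (0 : ℝ) ≤ (σ ^ 2)⁻¹ := by positivity
  have hSX : (S0.submatrix X X).PosSemidef := hS0.submatrix X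
  have hpos : ∀ j : Fin M,
      (0 : ℝ) < ((1 : Matrix (Fin n) (Fin n) ℝ)
        + ((σ ^ 2)⁻¹ * hK.isHermitian.eigenvalues j) • S0.submatrix X X).det := by
    intro j
    refine Matrix.PosDef.det_pos ?_
    exact Matrix.PosDef.add_posSemidef Matrix.PosDef.one
      (psd_smul_nonneg hSX (mul_nonneg hc (hK.eigenvalues_nonneg j)))
  rw [det_one_add_smul_kronecker ((σ ^ 2)⁻¹) (S0.submatrix X X) K hK.isHermitian,
    Real.log_prod (fun j _ => (hpos j).ne'), Finset.mul_sum]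
  refine Finset.sum_le_sum fun j _ => ?_
  have hsc : hK.isHermitian.eigenvalues j / σ ^ 2 = (σ ^ 2)⁻¹ * hK.isHermitian.eigenvalues j :=
    div_eq_inv_mul _ _
  calc (1 / 2) * Real.log ((1 + ((σ ^ 2)⁻¹ * hK.isHermitian.eigenvalues j)
          • S0.submatrix X X).det)
      = (fun X : Fin n → V => (1 / 2) * Real.log
          ((1 + (hK.isHermitian.eigenvalues j / σ ^ 2) • (S0.submatrix X X)).det)) X := by
        rw [hsc]
    _ ≤ _ := Finset.le_sup' (fun X : Fin n → V => (1 / 2) * Real.log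
          ((1 + (hK.isHermitian.eigenvalues j / σ ^ 2) • (S0.submatrix X X)).det))
          (Finset.mem_univ X)
end

section
/- Let S be a symmetric positive semidefinite M × M real matrix all of whose eigenvalues are at most a, where a > 0, and let σ > 0. Then trace(S) ≤ (a / log(1 + a/σ²)) · log det(I_M + σ^{-2} S), where log is the natural logarithm. -/
open Matrix

lemma key_ineq {a lam t : ℝ} (ha : 0 < a) (hl : 0 ≤ lam) (hla : lam ≤ a) (ht : 0 < t) :
    lam * Real.log (1 + t * a) ≤ a * Real.log (1 + t * lam) := by
  have h1 : (1 + t * a) ^ (lam / a) ≤ 1 + (lam / a) * (t * a) := by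
    apply rpow_one_add_le_one_add_mul_self
    · nlinarith
    · positivity
    · exact div_le_one_of_le₀ hla ha.le
  have h2 : (lam / a) * (t * a) = t * lam := by field_simp
  have h3 : (0:ℝ) < 1 + t * a := by nlinarith
  have h4 : (0:ℝ) < 1 + t * lam := by nlinarith
  have h5 : Real.log ((1 + t * a) ^ (lam / a)) ≤ Real.log (1 + t * lam) := by
    apply Real.log_le_log (by positivity)
    rw [← h2]; exact h1
  rw [Real.log_rpow h3] at h5
  have := mul_le_mul_of_nonneg_left h5 ha.le
  calc lam * Real.log (1 + t * a) = a * (lam / a * Real.log (1 + t * a)) := by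
        field_simp
    _ ≤ a * Real.log (1 + t * lam) := this

/-- If `S` is a symmetric positive semidefinite `M × M` real matrix all of whose
eigenvalues are at most `a > 0`, and `σ > 0`, then
`trace S ≤ (a / log (1 + a/σ²)) * log det (I + σ⁻² • S)`. -/
theorem trace_le_div_log_mul_log_det
    {M : ℕ} (S : Matrix (Fin M) (Fin M) ℝ) (hS : S.PosSemidef)
    (a : ℝ) (ha : 0 < a)
    (heig : ∀ j : Fin M, hS.isHermitian.eigenvalues j ≤ a)
    (σ : ℝ) (hσ : 0 < σ) :
    S.trace ≤ (a / Real.log (1 + a / σ ^ 2)) * Real.log ((1 + (σ ^ 2)⁻¹ • S).det) := by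
  set c : ℝ := (σ ^ 2)⁻¹ with hc
  have hcpos : 0 < c := by positivity
  set lam := hS.isHermitian.eigenvalues with hlam
  have hnn : ∀ j, 0 ≤ lam j := fun j => hS.eigenvalues_nonneg j
  set U : Matrix (Fin M) (Fin M) ℝ := (hS.isHermitian.eigenvectorUnitary : Matrix (Fin M) (Fin M) ℝ) with hU
  have hUU : U * star U = 1 := (Matrix.mem_unitaryGroup_iff).mp hS.isHermitian.eigenvectorUnitary.2
  have hspec : S = U * Matrix.diagonal (RCLike.ofReal ∘ lam) * star U :=
    hS.isHermitian.spectral_theorem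
  -- trace
  have htrace : S.trace = ∑ j, lam j := by
    rw [hspec, Matrix.trace_mul_cycle]
    have h1 : star U * U = 1 := (Matrix.mem_unitaryGroup_iff').mp hS.isHermitian.eigenvectorUnitary.2
    rw [h1, Matrix.one_mul, Matrix.trace_diagonal]
    rfl
  -- det
  have hdet : (1 + c • S).det = ∏ j, (1 + c * lam j) := by
    have : (1 : Matrix (Fin M) (Fin M) ℝ) + c • S
        = U * Matrix.diagonal (fun j => 1 + c * lam j) * star U := by
      have hD : Matrix.diagonal (fun j => 1 + c * lam j)
          = 1 + c • Matrix.diagonal (RCLike.ofReal ∘ lam) := by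
        rw [← Matrix.diagonal_one, ← Matrix.diagonal_smul, ← Matrix.diagonal_add]
        congr 1
      rw [hspec, hD, Matrix.mul_add, Matrix.add_mul, Matrix.mul_one, hUU, Matrix.mul_smul,
        Matrix.smul_mul]
    rw [this, Matrix.det_mul_right_comm, hUU, Matrix.one_mul, Matrix.det_diagonal]
  -- main inequality
  have hlogpos : 0 < Real.log (1 + a / σ ^ 2) := by
    apply Real.log_pos; have : 0 < a / σ ^ 2 := by positivity
    linarith
  have hpos : ∀ j, 0 < 1 + c * lam j := fun j => by nlinarith [hnn j, hcpos]
  rw [htrace, hdet, Real.log_prod (fun j _ => (hpos j).ne')]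
  rw [div_mul_eq_mul_div, le_div_iff₀ hlogpos, Finset.sum_mul, Finset.mul_sum]
  apply Finset.sum_le_sum
  intro j _
  have hca : a / σ ^ 2 = c * a := by rw [hc]; ring
  rw [hca]
  exact key_ineq ha (hnn j) (heig j) hcpos
end

section
/- Let V be a finite nonempty vertex set and M ≥ 1 tasks. Let Σ_0 be a symmetric positive definite real matrix indexed by V × V with largest diagonal entry σ̄² > 0, and let K be a symmetric positive definite M × M real matrix with largest eigenvalue λ₁ > 0. Let σ > 0, and define the prior joint covariance Σ̃(0) = Σ_0 ⊗ K, indexed by V × {1,…,M}. Given a sampling sequence s_1, s_2, … in V, define the posterior covariance after k samples by Σ̃(k) = (Σ̃(0)⁻¹ + σ^{-2} Σ_{l=1}^k (E_{s_l} ⊗ I_M))⁻¹, where E_v is the V × V matrix with a single 1 in entry (v,v) and zeros elsewhere; and for i ∈ V let Σ̃_i(k) be the M × M diagonal block of Σ̃(k) with (a,b)-entry Σ̃(k)_{(i,a),(i,b)}. Assume the samples are chosen greedily: for every k ≥ 0, det(I_M + σ^{-2} Σ̃_{s_{k+1}}(k)) = max_{i ∈ V} det(I_M + σ^{-2} Σ̃_i(k)).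 Define the n-step multitask maximal mutual information gain γ_n^K = max_{X ∈ V^n} (1/2) log det(I_{nM} + σ^{-2} (Σ_X ⊗ K)), where Σ_X is the n × n principal submatrix of Σ_0 at the tuple X. Then for every n ≥ 1, max_{i ∈ V} trace(Σ̃_i(n)) ≤ (2 σ̄² λ₁ / log(1 + σ^{-2} σ̄² λ₁)) · γ_n^K / n. -/
open Matrix Kronecker

set_option linter.unusedVariables false
set_option linter.unusedSectionVars false

namespace UncAux

variable {m : Type*} [Fintype m] [DecidableEq m]

lemma dot_self_pos {v : m → ℝ} (hv : v ≠ 0) : 0 < v ⬝ᵥ v := by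
  obtain ⟨i, hi⟩ := Function.ne_iff.mp hv
  unfold dotProduct
  exact Finset.sum_pos' (fun j _ => mul_self_nonneg _)
    ⟨i, Finset.mem_univ i, mul_self_pos.mpr hi⟩

lemma psd_smul {X : Matrix m m ℝ} (hX : X.PosSemidef) {c : ℝ} (hc : 0 ≤ c) :
    (c • X).PosSemidef := by
  refine Matrix.PosSemidef.of_dotProduct_mulVec_nonneg ?_ (fun x => ?_)
  · unfold Matrix.IsHermitian at *
    rw [conjTranspose_smul, hX.1]
    simp
  · rw [smul_mulVec, dotProduct_smul, smul_eq_mul]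
    exact mul_nonneg hc (hX.dotProduct_mulVec_nonneg x)

lemma psd_sum {ι : Type*} (s : Finset ι) (f : ι → Matrix m m ℝ)
    (h : ∀ i ∈ s, (f i).PosSemidef) : (∑ i ∈ s, f i).PosSemidef := by
  classical
  induction s using Finset.induction_on with
  | empty => simpa using (Matrix.PosSemidef.zero : (0 : Matrix m m ℝ).PosSemidef)
  | @insert a s ha ih =>
    rw [Finset.sum_insert ha]
    exact (h a (Finset.mem_insert_self _ _)).add
      (ih fun i hi => h i (Finset.mem_insert_of_mem hi))

variable {X : Matrix m m ℝ}

lemma unit_mul_star (hX : X.IsHermitian) :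
    (hX.eigenvectorUnitary : Matrix m m ℝ) * star (hX.eigenvectorUnitary : Matrix m m ℝ) = 1 :=
  (Matrix.mem_unitaryGroup_iff).mp (hX.eigenvectorUnitary).2

lemma star_mul_unit (hX : X.IsHermitian) :
    star (hX.eigenvectorUnitary : Matrix m m ℝ) * (hX.eigenvectorUnitary : Matrix m m ℝ) = 1 :=
  (Matrix.mem_unitaryGroup_iff').mp (hX.eigenvectorUnitary).2

lemma spectral_real (hX : X.IsHermitian) :
    X = (hX.eigenvectorUnitary : Matrix m m ℝ) * diagonal hX.eigenvalues *
      star (hX.eigenvectorUnitary : Matrix m m ℝ) := by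
  conv_lhs => rw [hX.spectral_theorem]
  congr 2

lemma conj_spectral (hX : X.IsHermitian) (c : ℝ) :
    1 + c • X = (hX.eigenvectorUnitary : Matrix m m ℝ) *
      diagonal (fun j => 1 + c * hX.eigenvalues j) *
      star (hX.eigenvectorUnitary : Matrix m m ℝ) := by
  have hdiag : diagonal (fun j => 1 + c * hX.eigenvalues j)
      = 1 + c • diagonal hX.eigenvalues := by
    ext j k
    by_cases hjk : j = k
    · subst hjk; simp
    · simp [Matrix.diagonal_apply_ne _ hjk, Matrix.one_apply, hjk]
  calc 1 + c • X
      = 1 + c • ((hX.eigenvectorUnitary : Matrix m m ℝ) * diagonal hX.eigenvalues *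
        star (hX.eigenvectorUnitary : Matrix m m ℝ)) := by rw [← spectral_real hX]
    _ = (hX.eigenvectorUnitary : Matrix m m ℝ) * (1 + c • diagonal hX.eigenvalues) *
        star (hX.eigenvectorUnitary : Matrix m m ℝ) := by
        rw [Matrix.mul_add, Matrix.add_mul, mul_one, unit_mul_star hX, Matrix.mul_smul,
          Matrix.smul_mul, Matrix.mul_assoc]
    _ = _ := by rw [hdiag]

lemma det_one_add_smul (hX : X.IsHermitian) (c : ℝ) :
    (1 + c • X).det = ∏ j, (1 + c * hX.eigenvalues j) := by
  rw [conj_spectral hX c, det_mul, det_mul]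
  have h1 : (star (hX.eigenvectorUnitary : Matrix m m ℝ)).det *
      (hX.eigenvectorUnitary : Matrix m m ℝ).det = 1 := by
    rw [← det_mul, star_mul_unit hX, det_one]
  calc (hX.eigenvectorUnitary : Matrix m m ℝ).det *
      (diagonal (fun j => 1 + c * hX.eigenvalues j)).det *
      (star (hX.eigenvectorUnitary : Matrix m m ℝ)).det
      = (diagonal (fun j => 1 + c * hX.eigenvalues j)).det *
        ((star (hX.eigenvectorUnitary : Matrix m m ℝ)).det *
          (hX.eigenvectorUnitary : Matrix m m ℝ).det) := by ring
    _ = ∏ j, (1 + c * hX.eigenvalues j) := by rw [h1, mul_one, det_diagonal]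

lemma trace_eq_sum_eig (hX : X.IsHermitian) : X.trace = ∑ j, hX.eigenvalues j := by
  conv_lhs => rw [spectral_real hX]
  rw [Matrix.trace_mul_comm, ← Matrix.mul_assoc, star_mul_unit hX, one_mul, trace_diagonal]

lemma eig_le_of_psd (hX : X.IsHermitian) {B : ℝ}
    (h : (B • (1 : Matrix m m ℝ) - X).PosSemidef) (j : m) : hX.eigenvalues j ≤ B := by
  set v : m → ℝ := ⇑(hX.eigenvectorBasis j) with hv_def
  have hv0 : v ≠ 0 := by
    intro hcon
    apply hX.eigenvectorBasis.orthonormal.ne_zero j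
    ext i
    exact congrFun hcon i
  have hq := h.dotProduct_mulVec_nonneg v
  have hmul : (B • (1 : Matrix m m ℝ) - X) *ᵥ v = (B - hX.eigenvalues j) • v := by
    rw [Matrix.sub_mulVec, Matrix.smul_mulVec, Matrix.one_mulVec,
      hX.mulVec_eigenvectorBasis, sub_smul]
  rw [hmul] at hq
  have hstar : star v = v := by simp
  rw [hstar, dotProduct_smul, smul_eq_mul] at hq
  have hvv := dot_self_pos hv0
  nlinarith

lemma psd_smul_one_sub (hX : X.IsHermitian) {B : ℝ} (h : ∀ j, hX.eigenvalues j ≤ B) :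
    (B • (1 : Matrix m m ℝ) - X).PosSemidef := by
  have key : B • (1 : Matrix m m ℝ) - X = (hX.eigenvectorUnitary : Matrix m m ℝ) *
      diagonal (fun j => B - hX.eigenvalues j) *
      star (hX.eigenvectorUnitary : Matrix m m ℝ) := by
    have hdiag : diagonal (fun j => B - hX.eigenvalues j)
        = B • (1 : Matrix m m ℝ) - diagonal hX.eigenvalues := by
      ext j k
      by_cases hjk : j = k
      · subst hjk; simp
      · simp [Matrix.diagonal_apply_ne _ hjk, Matrix.one_apply, hjk]
    calc B • (1 : Matrix m m ℝ) - X
        = B • (1 : Matrix m m ℝ) - (hX.eigenvectorUnitary : Matrix m m ℝ) *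
          diagonal hX.eigenvalues * star (hX.eigenvectorUnitary : Matrix m m ℝ) := by
          rw [← spectral_real hX]
      _ = (hX.eigenvectorUnitary : Matrix m m ℝ) * (B • (1 : Matrix m m ℝ) -
          diagonal hX.eigenvalues) * star (hX.eigenvectorUnitary : Matrix m m ℝ) := by
          rw [Matrix.mul_sub, Matrix.sub_mul, Matrix.mul_smul, Matrix.smul_mul, mul_one,
            unit_mul_star hX, Matrix.mul_assoc]
      _ = _ := by rw [hdiag]
  rw [key, Matrix.star_eq_conjTranspose]
  exact Matrix.PosSemidef.mul_mul_conjTranspose_same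
    (Matrix.PosSemidef.diagonal (fun j => sub_nonneg.mpr (h j))) _

lemma one_le_det_one_add_smul (hX : X.PosSemidef) {c : ℝ} (hc : 0 ≤ c) :
    1 ≤ (1 + c • X).det := by
  rw [det_one_add_smul hX.1 c]
  calc (1 : ℝ) = ∏ _j : m, 1 := by simp
    _ ≤ ∏ j, (1 + c * hX.1.eigenvalues j) := by
        apply Finset.prod_le_prod (by simp)
        intro j _
        have := hX.eigenvalues_nonneg j
        nlinarith

lemma det_pos_one_add_smul (hX : X.PosSemidef) {c : ℝ} (hc : 0 ≤ c) :
    0 < (1 + c • X).det :=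
  lt_of_lt_of_le one_pos (one_le_det_one_add_smul hX hc)



open scoped MatrixOrder in
lemma exists_sqrt_psd {A : Matrix m m ℝ} (hA : A.PosSemidef) :
    ∃ R : Matrix m m ℝ, R.PosSemidef ∧ R * R = A :=
  ⟨CFC.sqrt A, (CFC.sqrt_nonneg A).posSemidef, CFC.sqrt_mul_sqrt_self A hA.nonneg⟩

lemma det_le_det_add {A H : Matrix m m ℝ} (hA : A.PosDef) (hH : H.PosSemidef) :
    A.det ≤ (A + H).det := by
  obtain ⟨R, hRpsd, hRR⟩ := exists_sqrt_psd hA.posSemidef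
  have hdetA : 0 < A.det := hA.det_pos
  have hdetR : R.det ≠ 0 := by
    intro h0
    rw [← hRR, det_mul, h0, mul_zero] at hdetA
    exact lt_irrefl _ hdetA
  have hRinv : R * R⁻¹ = 1 := mul_nonsing_inv R (isUnit_iff_ne_zero.mpr hdetR)
  have hinvR : R⁻¹ * R = 1 := nonsing_inv_mul R (isUnit_iff_ne_zero.mpr hdetR)
  have hRinvH : R⁻¹.IsHermitian := hRpsd.1.inv
  have hW : (R⁻¹ * H * R⁻¹).PosSemidef := by
    have h := hH.conjTranspose_mul_mul_same R⁻¹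
    rwa [hRinvH.eq] at h
  have key : A + H = R * (1 + R⁻¹ * H * R⁻¹) * R := by
    rw [Matrix.mul_add, Matrix.mul_one, Matrix.add_mul, hRR]
    congr 1
    calc H = R * R⁻¹ * H * (R⁻¹ * R) := by
          rw [hRinv, hinvR, Matrix.one_mul, Matrix.mul_one]
      _ = R * (R⁻¹ * H * R⁻¹) * R := by simp only [Matrix.mul_assoc]
  have h1W : 1 ≤ (1 + R⁻¹ * H * R⁻¹).det := by
    have h := one_le_det_one_add_smul hW (zero_le_one' ℝ)
    rwa [one_smul] at h
  calc A.det = A.det * 1 := (mul_one _).symm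
    _ ≤ A.det * (1 + R⁻¹ * H * R⁻¹).det := by
        exact mul_le_mul_of_nonneg_left h1W hdetA.le
    _ = (A + H).det := by
        rw [key, det_mul, det_mul]
        have : R.det * R.det = A.det := by rw [← det_mul, hRR]
        rw [← this]; ring

lemma inv_sub_inv_psd {A H : Matrix m m ℝ} (hA : A.PosDef) (hH : H.PosSemidef) :
    (A⁻¹ - (A + H)⁻¹).PosSemidef := by
  have hB : (A + H).PosDef := hA.add_posSemidef hH
  have hAd : IsUnit A.det := isUnit_iff_ne_zero.mpr hA.det_pos.ne'
  have hBd : IsUnit (A + H).det := isUnit_iff_ne_zero.mpr hB.det_pos.ne'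
  have hBinv : (A + H) * (A + H)⁻¹ = 1 := mul_nonsing_inv _ hBd
  have hinvB : (A + H)⁻¹ * (A + H) = 1 := nonsing_inv_mul _ hBd
  have hAinv : A * A⁻¹ = 1 := mul_nonsing_inv _ hAd
  have hinvA : A⁻¹ * A = 1 := nonsing_inv_mul _ hAd
  have hBiH : (A + H)⁻¹.IsHermitian := hB.isHermitian.inv
  have hmid : (H + H * A⁻¹ * H).PosSemidef := by
    refine hH.add ?_
    have h := (hA.inv.posSemidef).conjTranspose_mul_mul_same H
    rwa [hH.1.eq] at h
  have hexp : (A + H) * A⁻¹ * (A + H) - (A + H) = H + H * A⁻¹ * H := by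
    calc (A + H) * A⁻¹ * (A + H) - (A + H)
        = (1 + H * A⁻¹) * (A + H) - (A + H) := by rw [Matrix.add_mul A H A⁻¹, hAinv]
      _ = A + H + (H * A⁻¹ * A + H * A⁻¹ * H) - (A + H) := by
          rw [Matrix.add_mul, Matrix.one_mul, Matrix.mul_add]
      _ = H + H * A⁻¹ * H := by
          rw [Matrix.mul_assoc H A⁻¹ A, hinvA, Matrix.mul_one]
          abel
  have key : A⁻¹ - (A + H)⁻¹ = (A + H)⁻¹ * (H + H * A⁻¹ * H) * (A + H)⁻¹ := by
    rw [← hexp, Matrix.mul_sub, Matrix.sub_mul]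
    congr 1
    · calc A⁻¹ = (A + H)⁻¹ * (A + H) * A⁻¹ * ((A + H) * (A + H)⁻¹) := by
            rw [hinvB, hBinv, Matrix.one_mul, Matrix.mul_one]
        _ = (A + H)⁻¹ * ((A + H) * A⁻¹ * (A + H)) * (A + H)⁻¹ := by
            simp only [Matrix.mul_assoc]
    · rw [hinvB, Matrix.one_mul]
  rw [key]
  have h := hmid.conjTranspose_mul_mul_same (A + H)⁻¹
  rwa [hBiH.eq] at h

section Sel

variable {ι κ : Type*} [Fintype ι] [Fintype κ] [DecidableEq ι] [DecidableEq κ]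

/-- Selection matrix of a map `e : κ → ι`. -/
noncomputable def sel (e : κ → ι) : Matrix ι κ ℝ :=
  Matrix.of fun p q => if p = e q then 1 else 0

lemma sel_conj (e : κ → ι) (Y : Matrix ι ι ℝ) :
    (sel e)ᵀ * Y * sel e = Y.submatrix e e := by
  ext a b
  simp only [Matrix.mul_apply, Matrix.transpose_apply, sel, Matrix.of_apply,
    Matrix.submatrix_apply, ite_mul, one_mul, zero_mul, mul_ite, mul_one, mul_zero]
  rw [Finset.sum_ite_eq' Finset.univ (e b)]
  simp [Finset.sum_ite_eq' Finset.univ (e a)]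

lemma sel_mul_selT (e : κ → ι) :
    sel e * (sel e)ᵀ = ∑ k : κ, single (e k) (e k) (1 : ℝ) := by
  ext p q
  simp only [Matrix.mul_apply, Matrix.transpose_apply, sel, Matrix.of_apply,
    Matrix.sum_apply, Matrix.single_apply, ite_mul, one_mul, zero_mul]
  apply Finset.sum_congr rfl
  intro k _
  by_cases h1 : p = e k <;> by_cases h2 : q = e k <;> simp [h1, h2, eq_comm]

end Sel

section Kron

variable {V : Type*} [Fintype V] [DecidableEq V] {M : ℕ}

lemma kron_std_one (v : V) :
    (single v v (1 : ℝ)) ⊗ₖ (1 : Matrix (Fin M) (Fin M) ℝ)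
      = ∑ a : Fin M, single ((v, a) : V × Fin M) (v, a) (1 : ℝ) := by
  ext ⟨i, x⟩ ⟨j, y⟩
  simp only [Matrix.kroneckerMap_apply, Matrix.sum_apply, Matrix.single_apply,
    Matrix.one_apply, Matrix.of_apply, Prod.mk.injEq]
  by_cases hi : v = i <;> by_cases hj : v = j <;> by_cases hxy : x = y <;>
    subst_vars <;>
      simp_all [Finset.sum_ite_eq', Finset.filter_and, Finset.filter_eq',
        Finset.singleton_inter_of_notMem]

lemma herm_symm {α : Type*} [Fintype α] {S : Matrix α α ℝ} (hS : S.IsHermitian)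
    (p q : α) : S q p = S p q := by
  conv_rhs => rw [← hS.eq]
  simp

lemma kron_hermitian {S : Matrix V V ℝ} {K : Matrix (Fin M) (Fin M) ℝ}
    (hS : S.IsHermitian) (hK : K.IsHermitian) : (S ⊗ₖ K).IsHermitian := by
  unfold Matrix.IsHermitian
  ext ⟨i, a⟩ ⟨j, b⟩
  simp only [Matrix.conjTranspose_apply, Matrix.kroneckerMap_apply, star_trivial]
  rw [herm_symm hS i j, herm_symm hK a b]

lemma posDef_kronecker {S : Matrix V V ℝ} {K : Matrix (Fin M) (Fin M) ℝ}
    (hS : S.PosDef) (hK : K.PosDef) : (S ⊗ₖ K).PosDef := by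
  have hherm : (S ⊗ₖ K).IsHermitian := kron_hermitian hS.1 hK.1
  obtain ⟨R1, hR1psd, hR1⟩ := exists_sqrt_psd hS.posSemidef
  obtain ⟨R2, hR2psd, hR2⟩ := exists_sqrt_psd hK.posSemidef
  set N := R1 ⊗ₖ R2 with hN_def
  have hNN : N * N = S ⊗ₖ K := by
    rw [hN_def, ← Matrix.mul_kronecker_mul, hR1, hR2]
  have hNsym : Nᵀ = N := by
    have h1 : R1ᵀ = R1 := by
      rw [← Matrix.conjTranspose_eq_transpose_of_trivial]
      exact hR1psd.1.eq
    have h2 : R2ᵀ = R2 := by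
      rw [← Matrix.conjTranspose_eq_transpose_of_trivial]
      exact hR2psd.1.eq
    rw [hN_def, ← Matrix.kroneckerMap_transpose, h1, h2]
  have hdet : IsUnit (S ⊗ₖ K).det := by
    rw [Matrix.det_kronecker]
    exact isUnit_iff_ne_zero.mpr
      (mul_ne_zero (pow_ne_zero _ hS.det_pos.ne') (pow_ne_zero _ hK.det_pos.ne'))
  refine Matrix.PosDef.of_dotProduct_mulVec_pos hherm (fun x hx => ?_)
  have hNx : N *ᵥ x ≠ 0 := by
    intro h0
    apply hx
    have hSKx : (S ⊗ₖ K) *ᵥ x = 0 := by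
      rw [← hNN, ← Matrix.mulVec_mulVec, h0, Matrix.mulVec_zero]
    have : x = (S ⊗ₖ K)⁻¹ *ᵥ ((S ⊗ₖ K) *ᵥ x) := by
      rw [Matrix.mulVec_mulVec, Matrix.nonsing_inv_mul _ hdet, Matrix.one_mulVec]
    rw [this, hSKx, Matrix.mulVec_zero]
  have hquad : dotProduct (star x) ((S ⊗ₖ K) *ᵥ x) = (N *ᵥ x) ⬝ᵥ (N *ᵥ x) := by
    rw [star_trivial, ← hNN, ← Matrix.mulVec_mulVec, Matrix.dotProduct_mulVec]
    congr 1
    conv_lhs => rw [← hNsym]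
    rw [Matrix.vecMul_transpose]
  rw [hquad]
  exact dot_self_pos hNx

end Kron

lemma sub_submatrix {ι κ : Type*} (A B : Matrix ι ι ℝ) (e : κ → ι) :
    (A - B).submatrix e e = A.submatrix e e - B.submatrix e e := by
  ext a b
  simp [Matrix.submatrix_apply, Matrix.sub_apply]

lemma scalar_key {c B x : ℝ} (hc : 0 < c) (hB : 0 < B) (hx0 : 0 ≤ x) (hxB : x ≤ B) :
    x * Real.log (1 + c * B) ≤ B * Real.log (1 + c * x) := by
  have hmem1 : (1 : ℝ) ∈ Set.Ioi (0 : ℝ) := Set.mem_Ioi.mpr one_pos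
  have hmem2 : (1 + c * B) ∈ Set.Ioi (0 : ℝ) := Set.mem_Ioi.mpr (by nlinarith)
  have ha : (0 : ℝ) ≤ 1 - x / B := by
    rw [sub_nonneg]
    exact (div_le_one hB).mpr hxB
  have hb : (0 : ℝ) ≤ x / B := by positivity
  have hab : (1 - x / B) + x / B = 1 := by ring
  have h := strictConcaveOn_log_Ioi.concaveOn.2 hmem1 hmem2 ha hb hab
  have harg : (1 - x / B) • (1 : ℝ) + (x / B) • (1 + c * B) = 1 + c * x := by
    have hB0 : B ≠ 0 := hB.ne'
    field_simp
    simp only [smul_eq_mul]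
    rw [div_mul_eq_mul_div, div_mul_eq_mul_div, ← add_div, div_eq_iff hB0]
    ring
  rw [harg, Real.log_one, smul_eq_mul, smul_eq_mul, mul_zero, zero_add] at h
  calc x * Real.log (1 + c * B) = B * (x / B * Real.log (1 + c * B)) := by
        field_simp
      _ ≤ B * Real.log (1 + c * x) := mul_le_mul_of_nonneg_left h hB.le

end UncAux

open UncAux

variable {V : Type*} [Fintype V] [DecidableEq V]

/-- Posterior joint covariance `Σ̃(k)` of the multitask Gaussian field after `k` samples at
vertices `s 0, …, s (k-1)`: the inverse of the prior precision `(S0 ⊗ K)⁻¹` plus the accumulated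
information `σ⁻² ∑_l (E_{s l} ⊗ I_M)`. -/
noncomputable def postCov {M : ℕ} (S0 : Matrix V V ℝ) (K : Matrix (Fin M) (Fin M) ℝ)
    (σ : ℝ) (s : ℕ → V) (k : ℕ) : Matrix (V × Fin M) (V × Fin M) ℝ :=
  ((S0 ⊗ₖ K)⁻¹ + (σ ^ 2)⁻¹ •
      ∑ l ∈ Finset.range k,
        (Matrix.single (s l) (s l) (1 : ℝ)) ⊗ₖ (1 : Matrix (Fin M) (Fin M) ℝ))⁻¹

/-- The `M × M` diagonal block `Σ̃_i(k)` of the posterior covariance at vertex `i`. -/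
noncomputable def blockCov {M : ℕ} (S0 : Matrix V V ℝ) (K : Matrix (Fin M) (Fin M) ℝ)
    (σ : ℝ) (s : ℕ → V) (k : ℕ) (i : V) : Matrix (Fin M) (Fin M) ℝ :=
  (postCov S0 K σ s k).submatrix (fun a => (i, a)) (fun a => (i, a))

/-- Uncertainty reduction: under the greedy sampling policy, after `n` samples
the maximal trace of the diagonal blocks of the multitask posterior covariance satisfies
`max_i tr Σ̃_i(n) ≤ (2 σ̄² λ₁ / log(1 + σ⁻² σ̄² λ₁)) ⬝ γ_n^K / n`, where `σ̄²` is the largest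
diagonal entry of `S0`, `λ₁` the largest eigenvalue of `K`, and `γ_n^K` the `n`-step multitask
maximal mutual information gain. -/
theorem uncertainty_reduction [Nonempty V]
    (M : ℕ) (hM : 1 ≤ M)
    (S0 : Matrix V V ℝ) (hS0 : S0.PosDef)
    (sbar2 : ℝ) (hsbar2 : 0 < sbar2)
    (hdiag : IsGreatest (Set.range fun i : V => S0 i i) sbar2)
    (K : Matrix (Fin M) (Fin M) ℝ) (hK : K.PosDef)
    (lam1 : ℝ) (hlam1 : 0 < lam1)
    (hlammax : IsGreatest (Set.range hK.isHermitian.eigenvalues) lam1)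
    (σ : ℝ) (hσ : 0 < σ)
    (s : ℕ → V)
    (hgreedy : ∀ k : ℕ,
      (1 + (σ ^ 2)⁻¹ • blockCov S0 K σ s k (s k)).det =
        Finset.univ.sup' Finset.univ_nonempty
          (fun i : V => (1 + (σ ^ 2)⁻¹ • blockCov S0 K σ s k i).det))
    (n : ℕ) (hn : 1 ≤ n) :
    (Finset.univ.sup' Finset.univ_nonempty fun i : V => (blockCov S0 K σ s n i).trace) ≤
      (2 * sbar2 * lam1 / Real.log (1 + (σ ^ 2)⁻¹ * sbar2 * lam1)) *
        (Finset.univ.sup' Finset.univ_nonempty fun X : Fin n → V =>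
          (1 / 2) * Real.log ((1 + (σ ^ 2)⁻¹ • ((S0.submatrix X X) ⊗ₖ K)).det)) / n := by

  classical
  set c : ℝ := (σ ^ 2)⁻¹ with hc_def
  have hc : 0 < c := by rw [hc_def]; positivity
  set B : ℝ := sbar2 * lam1 with hB_def
  have hB : 0 < B := mul_pos hsbar2 hlam1
  set L : ℝ := Real.log (1 + c * sbar2 * lam1) with hL_def
  have hLB : L = Real.log (1 + c * B) := by rw [hL_def, hB_def, mul_assoc]
  have hL : 0 < L := by
    rw [hLB]
    exact Real.log_pos (by nlinarith)
  -- basic matrices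
  set A : Matrix (V × Fin M) (V × Fin M) ℝ := S0 ⊗ₖ K with hAdef
  have hApd : A.PosDef := posDef_kronecker hS0 hK
  have hAdet : IsUnit A.det := isUnit_iff_ne_zero.mpr hApd.det_pos.ne'
  set Q : ℕ → Matrix (V × Fin M) (V × Fin M) ℝ := fun k =>
    ∑ l ∈ Finset.range k, (Matrix.single (s l) (s l) (1 : ℝ)) ⊗ₖ
      (1 : Matrix (Fin M) (Fin M) ℝ) with hQdef
  set P : ℕ → Matrix (V × Fin M) (V × Fin M) ℝ := fun k => A⁻¹ + c • Q k with hPdef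
  have hpostP : ∀ k, postCov S0 K σ s k = (P k)⁻¹ := fun k => rfl
  -- positive semidefiniteness of information increments
  have hEk : ∀ v : V, Matrix.single v v (1 : ℝ) ⊗ₖ (1 : Matrix (Fin M) (Fin M) ℝ)
      = sel (fun a : Fin M => ((v, a) : V × Fin M)) *
        (sel (fun a : Fin M => ((v, a) : V × Fin M)))ᵀ := by
    intro v
    rw [kron_std_one, sel_mul_selT]
  have hEpsd : ∀ v : V,
      (Matrix.single v v (1 : ℝ) ⊗ₖ (1 : Matrix (Fin M) (Fin M) ℝ)).PosSemidef := by
    intro v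
    rw [hEk v, ← Matrix.conjTranspose_eq_transpose_of_trivial]
    exact Matrix.posSemidef_self_mul_conjTranspose _
  have hQpsd : ∀ k, (Q k).PosSemidef := fun k => psd_sum _ _ (fun l _ => hEpsd (s l))
  have hQdiff : ∀ k, k ≤ n → (Q n - Q k).PosSemidef := by
    intro k hkn
    have hsplit : Q n = Q k + ∑ l ∈ Finset.Ico k n,
        Matrix.single (s l) (s l) (1 : ℝ) ⊗ₖ (1 : Matrix (Fin M) (Fin M) ℝ) := by
      rw [hQdef]
      exact (Finset.sum_range_add_sum_Ico _ hkn).symm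
    rw [hsplit, add_sub_cancel_left]
    exact psd_sum _ _ (fun l _ => hEpsd (s l))
  have hPpd : ∀ k, (P k).PosDef :=
    fun k => hApd.inv.add_posSemidef (psd_smul (hQpsd k) hc.le)
  have hPdet : ∀ k, IsUnit (P k).det :=
    fun k => isUnit_iff_ne_zero.mpr (hPpd k).det_pos.ne'
  have hblockpsd : ∀ k i, (blockCov S0 K σ s k i).PosSemidef := by
    intro k i
    have h := ((hPpd k).inv.posSemidef).submatrix (fun a : Fin M => ((i, a) : V × Fin M))
    exact h
  have hselconj : ∀ k (i : V),
      (sel (fun a : Fin M => ((i, a) : V × Fin M)))ᵀ * (P k)⁻¹ *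
        sel (fun a : Fin M => ((i, a) : V × Fin M)) = blockCov S0 K σ s k i := by
    intro k i
    rw [sel_conj]
    rfl
  -- determinant update step
  have hstep : ∀ k, (P (k + 1)).det
      = (P k).det * (1 + c • blockCov S0 K σ s k (s k)).det := by
    intro k
    have h1 : P (k + 1) = P k + c • (Matrix.single (s k) (s k) (1 : ℝ) ⊗ₖ
        (1 : Matrix (Fin M) (Fin M) ℝ)) := by
      show A⁻¹ + c • Q (k + 1) = (A⁻¹ + c • Q k) + _
      have hQs : Q (k + 1) = Q k + Matrix.single (s k) (s k) (1 : ℝ) ⊗ₖ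
          (1 : Matrix (Fin M) (Fin M) ℝ) := by
        rw [hQdef]
        exact Finset.sum_range_succ _ k
      rw [hQs, smul_add, add_assoc]
    have h2 : P (k + 1) = P k * (1 + (P k)⁻¹ * (c • (Matrix.single (s k) (s k) (1 : ℝ) ⊗ₖ
        (1 : Matrix (Fin M) (Fin M) ℝ)))) := by
      rw [Matrix.mul_add, Matrix.mul_one, ← Matrix.mul_assoc,
        Matrix.mul_nonsing_inv _ (hPdet k), Matrix.one_mul, h1]
    have e1 : (1 : Matrix (V × Fin M) (V × Fin M) ℝ) + (P k)⁻¹ *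
        (c • (Matrix.single (s k) (s k) (1 : ℝ) ⊗ₖ (1 : Matrix (Fin M) (Fin M) ℝ)))
        = 1 + (c • ((P k)⁻¹ * sel (fun a : Fin M => ((s k, a) : V × Fin M)))) *
            (sel (fun a : Fin M => ((s k, a) : V × Fin M)))ᵀ := by
      rw [hEk (s k), Matrix.mul_smul, Matrix.smul_mul, Matrix.mul_assoc]
    have e2 : (1 : Matrix (Fin M) (Fin M) ℝ) +
        (sel (fun a : Fin M => ((s k, a) : V × Fin M)))ᵀ *
          (c • ((P k)⁻¹ * sel (fun a : Fin M => ((s k, a) : V × Fin M))))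
        = 1 + c • blockCov S0 K σ s k (s k) := by
      rw [Matrix.mul_smul, ← Matrix.mul_assoc, hselconj k (s k)]
    rw [h2, det_mul, e1, Matrix.det_one_add_mul_comm, e2]
  -- telescoping
  have htel : ∀ t, (P t).det
      = (A⁻¹).det * ∏ k ∈ Finset.range t, (1 + c • blockCov S0 K σ s k (s k)).det := by
    intro t
    induction t with
    | zero =>
      have hP0 : P 0 = A⁻¹ := by
        show A⁻¹ + c • Q 0 = A⁻¹
        have : Q 0 = 0 := by rw [hQdef]; simp
        rw [this, smul_zero, add_zero]
      rw [hP0]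
      simp
    | succ t ih =>
      rw [hstep t, ih, Finset.prod_range_succ, mul_assoc]
  -- global determinant identity
  have hQn : sel (fun q : Fin n × Fin M => ((s ↑q.1, q.2) : V × Fin M)) *
      (sel (fun q : Fin n × Fin M => ((s ↑q.1, q.2) : V × Fin M)))ᵀ = Q n := by
    rw [sel_mul_selT, Fintype.sum_prod_type]
    calc (∑ l : Fin n, ∑ a : Fin M,
          Matrix.single ((s ↑l, a) : V × Fin M) (s ↑l, a) (1 : ℝ))
        = ∑ l : Fin n, Matrix.single (s ↑l) (s ↑l) (1 : ℝ) ⊗ₖ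
            (1 : Matrix (Fin M) (Fin M) ℝ) :=
          Finset.sum_congr rfl (fun l _ => (kron_std_one (s ↑l)).symm)
      _ = Q n := by
          rw [hQdef]
          exact Fin.sum_univ_eq_sum_range (fun l => Matrix.single (s l) (s l) (1 : ℝ) ⊗ₖ
            (1 : Matrix (Fin M) (Fin M) ℝ)) n
  have hsubA : A.submatrix (fun q : Fin n × Fin M => ((s ↑q.1, q.2) : V × Fin M))
      (fun q : Fin n × Fin M => ((s ↑q.1, q.2) : V × Fin M))
      = (S0.submatrix (fun l : Fin n => s ↑l) (fun l : Fin n => s ↑l)) ⊗ₖ K := by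
    ext ⟨l, a⟩ ⟨l', b⟩
    rfl
  have hbigdet : (P n).det * A.det
      = (1 + c • ((S0.submatrix (fun l : Fin n => s ↑l) (fun l : Fin n => s ↑l)) ⊗ₖ K)).det := by
    have hPA : P n * A = 1 + (sel (fun q : Fin n × Fin M => ((s ↑q.1, q.2) : V × Fin M)) *
        (c • ((sel (fun q : Fin n × Fin M => ((s ↑q.1, q.2) : V × Fin M)))ᵀ * A))) := by
      show (A⁻¹ + c • Q n) * A = _
      rw [Matrix.add_mul, Matrix.nonsing_inv_mul _ hAdet, Matrix.smul_mul, ← hQn,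
        Matrix.mul_smul, Matrix.mul_assoc]
    have e4 : (1 : Matrix (Fin n × Fin M) (Fin n × Fin M) ℝ) +
        (c • ((sel (fun q : Fin n × Fin M => ((s ↑q.1, q.2) : V × Fin M)))ᵀ * A)) *
          sel (fun q : Fin n × Fin M => ((s ↑q.1, q.2) : V × Fin M))
        = 1 + c • ((S0.submatrix (fun l : Fin n => s ↑l) (fun l : Fin n => s ↑l)) ⊗ₖ K) := by
      rw [Matrix.smul_mul, sel_conj, hsubA]
    rw [← det_mul, hPA, Matrix.det_one_add_mul_comm, e4]
  have hAA : (A⁻¹).det * A.det = 1 := by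
    rw [← det_mul, Matrix.nonsing_inv_mul _ hAdet, det_one]
  have hprod : (∏ k ∈ Finset.range n, (1 + c • blockCov S0 K σ s k (s k)).det)
      = (1 + c • ((S0.submatrix (fun l : Fin n => s ↑l) (fun l : Fin n => s ↑l)) ⊗ₖ K)).det := by
    have h := htel n
    calc (∏ k ∈ Finset.range n, (1 + c • blockCov S0 K σ s k (s k)).det)
        = ((A⁻¹).det * ∏ k ∈ Finset.range n, (1 + c • blockCov S0 K σ s k (s k)).det) *
            A.det := by
          rw [mul_comm ((A⁻¹).det) _, mul_assoc, hAA, mul_one]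
      _ = (P n).det * A.det := by rw [← h]
      _ = _ := hbigdet
  -- monotonicity of the blocks in time
  have hblockmono : ∀ k, k ≤ n → ∀ i : V,
      (blockCov S0 K σ s k i - blockCov S0 K σ s n i).PosSemidef := by
    intro k hkn i
    have hP : P n = P k + c • (Q n - Q k) := by
      show A⁻¹ + c • Q n = (A⁻¹ + c • Q k) + c • (Q n - Q k)
      rw [add_assoc, ← smul_add, add_sub_cancel]
    have h := inv_sub_inv_psd (hPpd k) (psd_smul (hQdiff k hkn) hc.le)
    rw [← hP] at h
    have h2 := h.submatrix (fun a : Fin M => ((i, a) : V × Fin M))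
    rw [sub_submatrix] at h2
    exact h2
  -- upper bound on the blocks
  have hblockub : ∀ i : V,
      (B • (1 : Matrix (Fin M) (Fin M) ℝ) - blockCov S0 K σ s n i).PosSemidef := by
    intro i
    have h0 : (A - (P n)⁻¹).PosSemidef := by
      have h := inv_sub_inv_psd hApd.inv (psd_smul (hQpsd n) hc.le)
      rwa [Matrix.nonsing_inv_nonsing_inv _ hAdet] at h
    have h1 : (S0 i i • K - blockCov S0 K σ s n i).PosSemidef := by
      have hsub0 := h0.submatrix (fun a : Fin M => ((i, a) : V × Fin M))
      rw [sub_submatrix] at hsub0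
      have hAsub : A.submatrix (fun a : Fin M => ((i, a) : V × Fin M))
          (fun a : Fin M => ((i, a) : V × Fin M)) = S0 i i • K := by
        ext a b
        simp [Matrix.submatrix_apply, hAdef, Matrix.smul_apply, smul_eq_mul]
      rwa [hAsub] at hsub0
    have h2 : (sbar2 • K - S0 i i • K).PosSemidef := by
      rw [← sub_smul]
      exact psd_smul hK.posSemidef (sub_nonneg.mpr (hdiag.2 ⟨i, rfl⟩))
    have h3 : (B • (1 : Matrix (Fin M) (Fin M) ℝ) - sbar2 • K).PosSemidef := by
      have : B • (1 : Matrix (Fin M) (Fin M) ℝ) - sbar2 • K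
          = sbar2 • (lam1 • (1 : Matrix (Fin M) (Fin M) ℝ) - K) := by
        rw [smul_sub, smul_smul, hB_def]
      rw [this]
      exact psd_smul (psd_smul_one_sub hK.isHermitian (fun j => hlammax.2 ⟨j, rfl⟩)) hsbar2.le
    have hsum : B • (1 : Matrix (Fin M) (Fin M) ℝ) - blockCov S0 K σ s n i
        = (B • (1 : Matrix (Fin M) (Fin M) ℝ) - sbar2 • K) + ((sbar2 • K - S0 i i • K) +
          (S0 i i • K - blockCov S0 K σ s n i)) := by abel
    rw [hsum]
    exact h3.add (h2.add h1)
  -- the gamma quantity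
  set gam : ℝ := Finset.univ.sup' Finset.univ_nonempty
    (fun X : Fin n → V => (1 / 2) * Real.log ((1 + c • ((S0.submatrix X X) ⊗ₖ K)).det))
    with hgamdef
  have hgam0 : Real.log ((1 + c • ((S0.submatrix (fun l : Fin n => s ↑l)
      (fun l : Fin n => s ↑l)) ⊗ₖ K)).det) ≤ 2 * gam := by
    have hle := Finset.le_sup' (f := fun X : Fin n → V =>
        (1 / 2) * Real.log ((1 + c • ((S0.submatrix X X) ⊗ₖ K)).det))
      (Finset.mem_univ (fun l : Fin n => s ↑l))
    rw [hgamdef]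
    linarith
  have hn0 : (0 : ℝ) < (n : ℝ) := by
    exact_mod_cast Nat.lt_of_lt_of_le Nat.zero_lt_one hn
  -- final bound for each vertex
  apply Finset.sup'_le
  intro i _
  have hdi1 : 1 ≤ (1 + c • blockCov S0 K σ s n i).det :=
    one_le_det_one_add_smul (hblockpsd n i) hc.le
  have hstep2 : ∀ k, k < n → (1 + c • blockCov S0 K σ s n i).det
      ≤ (1 + c • blockCov S0 K σ s k (s k)).det := by
    intro k hk
    have hA1 : (1 + c • blockCov S0 K σ s n i).PosDef :=
      Matrix.PosDef.one.add_posSemidef (psd_smul (hblockpsd n i) hc.le)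
    have hdet1 := det_le_det_add hA1 (psd_smul (hblockmono k hk.le i) hc.le)
    have heq : (1 + c • blockCov S0 K σ s n i) +
        c • (blockCov S0 K σ s k i - blockCov S0 K σ s n i)
        = 1 + c • blockCov S0 K σ s k i := by
      rw [smul_sub]
      abel
    rw [heq] at hdet1
    refine hdet1.trans ?_
    rw [hgreedy k]
    exact Finset.le_sup' (fun i : V => (1 + c • blockCov S0 K σ s k i).det)
      (Finset.mem_univ i)
  have hlogdi : Real.log ((1 + c • blockCov S0 K σ s n i).det) ≤ 2 * gam / (n : ℝ) := by
    have hsum : (n : ℝ) * Real.log ((1 + c • blockCov S0 K σ s n i).det)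
        ≤ ∑ k ∈ Finset.range n, Real.log ((1 + c • blockCov S0 K σ s k (s k)).det) := by
      calc (n : ℝ) * Real.log ((1 + c • blockCov S0 K σ s n i).det)
          = ∑ _k ∈ Finset.range n, Real.log ((1 + c • blockCov S0 K σ s n i).det) := by
            rw [Finset.sum_const, Finset.card_range, nsmul_eq_mul]
        _ ≤ _ := Finset.sum_le_sum (fun k hk => Real.log_le_log
            (lt_of_lt_of_le one_pos hdi1) (hstep2 k (Finset.mem_range.mp hk)))
    have hsumlog : ∑ k ∈ Finset.range n, Real.log ((1 + c • blockCov S0 K σ s k (s k)).det)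
        = Real.log ((1 + c • ((S0.submatrix (fun l : Fin n => s ↑l)
            (fun l : Fin n => s ↑l)) ⊗ₖ K)).det) := by
      rw [← Real.log_prod
        (fun k _ => (det_pos_one_add_smul (hblockpsd k (s k)) hc.le).ne'), hprod]
    rw [hsumlog] at hsum
    rw [le_div_iff₀ hn0]
    calc Real.log ((1 + c • blockCov S0 K σ s n i).det) * (n : ℝ)
        = (n : ℝ) * Real.log ((1 + c • blockCov S0 K σ s n i).det) := by ring
      _ ≤ _ := hsum.trans hgam0
  -- trace bound via eigenvalues
  have hTh : (blockCov S0 K σ s n i).IsHermitian := (hblockpsd n i).1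
  have heig0 : ∀ j, 0 ≤ hTh.eigenvalues j := fun j => (hblockpsd n i).eigenvalues_nonneg j
  have heigB : ∀ j, hTh.eigenvalues j ≤ B := fun j => eig_le_of_psd hTh (hblockub i) j
  have htrace : (blockCov S0 K σ s n i).trace = ∑ j, hTh.eigenvalues j := trace_eq_sum_eig hTh
  have hdetprod : (1 + c • blockCov S0 K σ s n i).det = ∏ j, (1 + c * hTh.eigenvalues j) :=
    det_one_add_smul hTh c
  have hlogprod : Real.log ((1 + c • blockCov S0 K σ s n i).det)
      = ∑ j, Real.log (1 + c * hTh.eigenvalues j) := by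
    rw [hdetprod]
    exact Real.log_prod (fun j _ => by nlinarith [heig0 j])
  have htr : (blockCov S0 K σ s n i).trace
      ≤ B / L * Real.log ((1 + c • blockCov S0 K σ s n i).det) := by
    rw [htrace, div_mul_eq_mul_div, le_div_iff₀ hL, hlogprod, Finset.sum_mul, Finset.mul_sum]
    apply Finset.sum_le_sum
    intro j _
    rw [hLB]
    exact scalar_key hc hB (heig0 j) (heigB j)
  have hfinal : (blockCov S0 K σ s n i).trace ≤ B / L * (2 * gam / (n : ℝ)) :=
    htr.trans (mul_le_mul_of_nonneg_left hlogdi (by positivity))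
  calc (blockCov S0 K σ s n i).trace ≤ B / L * (2 * gam / (n : ℝ)) := hfinal
    _ = 2 * sbar2 * lam1 / L * gam / (n : ℝ) := by rw [hB_def]; ring
end
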